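/- arXiv:math/0401389 — 6 statements merged into one kernel-verified Lean document; each statement's English description precedes it below -/
import Mathlib

section
/- For two real-valued random variables U and V defined on a common probability space, U = V almost surely if and only if U, V, and min(U,V) all have the same distribution. -/
open MeasureTheory

/-- For two real-valued random variables `U` and `V` on a common
probability space, `U = V` almost surely if and only if `U`, `V`, and
`min (U, V)` all have the same distribution. -/
theorem stmt0 {Ω : Type*} [MeasurableSpace Ω] (P : Measure Ω) [IsProbabilityMeasure P]
    (U V : Ω → ℝ) (hU : Measurable U) (hV : Measurable V) :
    U =ᵐ[P] V ↔
      (P.map U = P.map V ∧ P.map U = P.map (fun ω => min (U ω) (V ω))) := by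
  constructor
  · intro h
    refine ⟨Measure.map_congr h, Measure.map_congr ?_⟩
    filter_upwards [h] with ω hω
    simp [hω]
  · rintro ⟨h1, h2⟩
    have key : ∀ (f g : Ω → ℝ), Measurable f → Measurable g →
        P.map f = P.map (fun ω => min (f ω) (g ω)) →
        P {ω | g ω < f ω} = 0 := by
      intro f g hf hg hmap
      have hA : ∀ q : ℚ, P {ω | g ω ≤ (q:ℝ) ∧ (q:ℝ) < f ω} = 0 := by
        intro q
        have hm : Measurable fun ω => min (f ω) (g ω) := hf.min hg
        have e1 : P.map f (Set.Iic (q:ℝ)) = P (f ⁻¹' Set.Iic (q:ℝ)) :=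
          Measure.map_apply hf measurableSet_Iic
        have e2 : P.map (fun ω => min (f ω) (g ω)) (Set.Iic (q:ℝ)) =
            P ((fun ω => min (f ω) (g ω)) ⁻¹' Set.Iic (q:ℝ)) :=
          Measure.map_apply hm measurableSet_Iic
        have heq : P ((fun ω => min (f ω) (g ω)) ⁻¹' Set.Iic (q:ℝ)) =
            P (f ⁻¹' Set.Iic (q:ℝ)) := by
          rw [← e1, ← e2, hmap]
        have hsub : f ⁻¹' Set.Iic (q:ℝ) ⊆
            (fun ω => min (f ω) (g ω)) ⁻¹' Set.Iic (q:ℝ) := by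
          intro ω hω
          simp only [Set.mem_preimage, Set.mem_Iic] at hω ⊢
          exact le_trans (min_le_left _ _) hω
        have hset : {ω | g ω ≤ (q:ℝ) ∧ (q:ℝ) < f ω} =
            ((fun ω => min (f ω) (g ω)) ⁻¹' Set.Iic (q:ℝ)) \ (f ⁻¹' Set.Iic (q:ℝ)) := by
          ext ω
          simp only [Set.mem_setOf_eq, Set.mem_diff, Set.mem_preimage, Set.mem_Iic,
            min_le_iff, not_le]
          constructor
          · rintro ⟨h1, h2⟩; exact ⟨Or.inr h1, h2⟩
          · rintro ⟨h1, h2⟩; exact ⟨h1.resolve_left (not_le.2 h2), h2⟩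
        rw [hset, measure_diff hsub (hf measurableSet_Iic).nullMeasurableSet
          (measure_ne_top P _), heq, tsub_self]
      have hUnion : {ω | g ω < f ω} ⊆ ⋃ q : ℚ, {ω | g ω ≤ (q:ℝ) ∧ (q:ℝ) < f ω} := by
        intro ω hω
        obtain ⟨q, hq1, hq2⟩ := exists_rat_btwn (Set.mem_setOf_eq ▸ hω)
        exact Set.mem_iUnion.2 ⟨q, le_of_lt hq1, hq2⟩
      exact measure_mono_null hUnion (measure_iUnion_null_iff.2 hA)
    have hVU : P {ω | V ω < U ω} = 0 := key U V hU hV h2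
    have hUV : P {ω | U ω < V ω} = 0 := by
      apply key V U hV hU
      rw [← h1, h2]
      congr 1
      funext ω
      exact min_comm _ _
    have hne : P {ω | ¬ U ω = V ω} = 0 := by
      have hsub : {ω | ¬ U ω = V ω} ⊆ {ω | U ω < V ω} ∪ {ω | V ω < U ω} := by
        intro ω hω
        rcases lt_or_gt_of_ne hω with h | h
        · exact Or.inl h
        · exact Or.inr h
      exact measure_mono_null hsub (measure_union_null hUV hVU)
    exact ae_iff.mpr hne
end

section
/- For every f in 𝔉, the function T(f) also belongs to 𝔉; that is, T(f) is continuous, non-increasing, and satisfies H̄(x)² ≤ T(f)(x) ≤ H̄(x) for all real x. -/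
open MeasureTheory Real Set Filter

/-- The Logistic distribution function `H(x) = 1/(1+e^{-x})`. -/
noncomputable def H (x : ℝ) : ℝ := 1 / (1 + Real.exp (-x))

/-- The tail `H̄ := 1 - H` of the Logistic distribution function. -/
noncomputable def Hbar (x : ℝ) : ℝ := 1 - H x

/-- The set 𝔉 of continuous, non-increasing functions `f : ℝ → [0,1]`
with `H̄(x)² ≤ f(x) ≤ H̄(x)` for all `x`. -/
def memF (f : ℝ → ℝ) : Prop :=
  (∀ x, f x ∈ Set.Icc (0:ℝ) 1) ∧ Continuous f ∧ Antitone f ∧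
    ∀ x, Hbar x ^ 2 ≤ f x ∧ f x ≤ Hbar x

/-- The operator `T(f)(x) := H̄(x)² · exp(∫_{-x}^∞ f(s) ds)`. -/
noncomputable def T (f : ℝ → ℝ) (x : ℝ) : ℝ :=
  Hbar x ^ 2 * Real.exp (∫ s in Set.Ioi (-x), f s)

/-!
Since `∫_{-x}^∞ H̄ = log (1 + eˣ)` and `H̄(x) = 1/(1 + eˣ)`, the operator can be rewritten as
`T(f)(x) = H̄(x) · exp (-∫_{-x}^∞ (H̄ - f))`. For `0 ≤ f ≤ H̄` the integral in the exponent is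
nonnegative and non-decreasing in `x`, so `T(f) ≤ H̄` and `T(f)` is a product of two positive
non-increasing functions. The lower bound `H̄² ≤ T(f)` is immediate from `∫ f ≥ 0`.
-/

lemma continuous_setIntegral_Ioi {f : ℝ → ℝ} (hf : ∀ a, IntegrableOn f (Ioi a)) :
    Continuous fun b => ∫ x in Ioi b, f x :=
  continuous_iff_continuousAt.2 fun b =>
    ((hf (b - 1)).continuousOn_Ici_primitive_Ioi).continuousAt (Ici_mem_nhds (by linarith))

lemma Hbar_eq_inv (x : ℝ) : Hbar x = (1 + exp x)⁻¹ := by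
  have : exp (-x) * exp x = 1 := by rw [← exp_add, neg_add_cancel, exp_zero]
  unfold Hbar H
  field_simp
  linarith

lemma Hbar_pos (x : ℝ) : 0 < Hbar x := by
  rw [Hbar_eq_inv]; positivity

lemma Hbar_le_one (x : ℝ) : Hbar x ≤ 1 := by
  rw [Hbar_eq_inv]
  exact inv_le_one_of_one_le₀ (le_add_of_nonneg_right (exp_pos x).le)

lemma antitone_Hbar : Antitone Hbar := fun x y hxy => by
  rw [Hbar_eq_inv, Hbar_eq_inv]
  gcongr

lemma continuous_Hbar : Continuous Hbar := by
  rw [funext Hbar_eq_inv]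
  exact (continuous_const.add continuous_exp).inv₀ fun x => (add_pos one_pos (exp_pos x)).ne'

lemma hasDerivAt_neg_log_one_add_exp_neg (x : ℝ) :
    HasDerivAt (fun s => -log (1 + exp (-s))) (Hbar x) x := by
  have h := ((((hasDerivAt_neg x).exp).const_add 1).log (by positivity)).neg
  refine h.congr_deriv ?_
  rw [Hbar_eq_inv]
  have : exp x * exp (-x) = 1 := by rw [← exp_add, add_neg_cancel, exp_zero]
  field_simp
  linarith

lemma tendsto_neg_log_one_add_exp_neg :
    Tendsto (fun s => -log (1 + exp (-s))) atTop (nhds 0) := by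
  have h : Tendsto (fun s => 1 + exp (-s)) atTop (nhds 1) := by
    simpa using (tendsto_exp_atBot.comp tendsto_neg_atTop_atBot).const_add 1
  simpa using ((continuousAt_log one_ne_zero).tendsto.comp h).neg

lemma integrableOn_Hbar_Ioi (a : ℝ) : IntegrableOn Hbar (Ioi a) :=
  integrableOn_Ioi_deriv_of_nonneg' (fun x _ => hasDerivAt_neg_log_one_add_exp_neg x)
    (fun x _ => (Hbar_pos x).le) tendsto_neg_log_one_add_exp_neg

lemma integral_Hbar_Ioi (a : ℝ) : ∫ s in Ioi a, Hbar s = log (1 + exp (-a)) := by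
  rw [integral_Ioi_of_hasDerivAt_of_nonneg' (fun x _ => hasDerivAt_neg_log_one_add_exp_neg x)
    (fun x _ => (Hbar_pos x).le) tendsto_neg_log_one_add_exp_neg, zero_sub, neg_neg]

lemma T_eq_Hbar_mul_exp {f : ℝ → ℝ} {x : ℝ} (hf : IntegrableOn f (Ioi (-x))) :
    T f x = Hbar x * exp (-∫ s in Ioi (-x), (Hbar s - f s)) := by
  rw [integral_sub (integrableOn_Hbar_Ioi _) hf, integral_Hbar_Ioi, neg_neg, neg_sub, exp_sub,
    exp_log (by positivity), T, Hbar_eq_inv]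
  field_simp

lemma memF.integrableOn_Ioi {f : ℝ → ℝ} (hf : memF f) (a : ℝ) : IntegrableOn f (Ioi a) :=
  (integrableOn_Hbar_Ioi a).mono' hf.2.1.aestronglyMeasurable.restrict <|
    ae_of_all _ fun x => by
      rw [norm_of_nonneg (hf.1 x).1]
      exact (hf.2.2.2 x).2

/-- For every `f ∈ 𝔉`, `T(f) ∈ 𝔉`: `T(f)` is continuous,
non-increasing, and `H̄(x)² ≤ T(f)(x) ≤ H̄(x)` for all `x`. -/
theorem stmt2 (f : ℝ → ℝ) (hf : memF f) : memF (T f) := by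
  have hint := hf.integrableOn_Ioi
  have hgap : ∀ x, 0 ≤ Hbar x - f x := fun x => sub_nonneg.2 (hf.2.2.2 x).2
  set g := fun x => ∫ s in Ioi (-x), (Hbar s - f s)
  have hg_nonneg : ∀ x, 0 ≤ g x := fun x => setIntegral_nonneg measurableSet_Ioi fun s _ => hgap s
  have hg_mono : Monotone g := fun x y hxy =>
    setIntegral_mono_set ((integrableOn_Hbar_Ioi _).sub (hint _)) (ae_of_all _ hgap)
      (Ioi_subset_Ioi (neg_le_neg hxy)).eventuallyLE
  have hT : ∀ x, T f x = Hbar x * exp (-g x) := fun x => T_eq_Hbar_mul_exp (hint _)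
  have hlb : ∀ x, Hbar x ^ 2 ≤ T f x := fun x =>
    le_mul_of_one_le_right (sq_nonneg _)
      (one_le_exp (setIntegral_nonneg measurableSet_Ioi fun s _ => (hf.1 s).1))
  have hub : ∀ x, T f x ≤ Hbar x := fun x => by
    rw [hT]
    exact mul_le_of_le_one_right (Hbar_pos x).le (exp_le_one_iff.2 (neg_nonpos.2 (hg_nonneg x)))
  have hcont : Continuous (T f) :=
    (continuous_Hbar.pow 2).mul ((continuous_setIntegral_Ioi hint).comp continuous_neg).rexp
  have hanti : Antitone (T f) := fun x y hxy => by
    rw [hT, hT]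
    exact mul_le_mul (antitone_Hbar hxy) (exp_le_exp.2 (neg_le_neg (hg_mono hxy)))
      (exp_pos _).le (Hbar_pos x).le
  exact ⟨fun x => ⟨(sq_nonneg _).trans (hlb x), (hub x).trans (Hbar_le_one x)⟩, hcont, hanti,
    fun x => ⟨hlb x, hub x⟩⟩
end

section
/- For every n ≥ 1 and every x ∈ ℝ, f_n(x) = H̄(x) · exp(−β_{n−1}(H̄(x))), where f_0 := H̄² and f_n := T(f_{n−1}) for n ≥ 1. -/
/-! With `H` the sigmoid, `H' = H H̄`, so the substitution `w = H(s)` gives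
`∫_{-x}^∞ H̄(s) φ(H̄(s)) ds = ∫_{H̄(x)}^1 φ(1-w)/w dw`
`= -log H̄(x) - ∫_{H̄(x)}^1 (1/w)(1 - φ(1-w)) dw`,
hence `T(H̄ · φ ∘ H̄)(x) = H̄(x) exp(-∫_{H̄(x)}^1 (1/w)(1 - φ(1-w)) dw)`.
For `f₀ = H̄ · H̄` (`φ = id`) the last integral is `1 - H̄(x) = β₀(H̄(x))`, and for
`φ = exp(-β_{n-1})` it is `β_n(H̄(x))` by definition. The integrals exist because
`0 ≤ β_n(s) ≤ 1 - s` on `[0, 1]`, which keeps the integrand of `β_{n+1}` in `[0, 1]`. -/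

open MeasureTheory Real Set Filter

/-- The recursively defined sequence of functions `β_n`:
`β₀(s) = 1 - s` and `β_n(s) = ∫_s^1 (1/w)(1 - e^{-β_{n-1}(1-w)}) dw`. -/
noncomputable def beta : ℕ → ℝ → ℝ
  | 0, s => 1 - s
  | n + 1, s => ∫ w in Set.Ioc s 1, (1 / w) * (1 - Real.exp (-(beta n (1 - w))))

/-- The iterates `f₀ := H̄²`, `f_n := T(f_{n-1})`. -/
noncomputable def fseq : ℕ → ℝ → ℝ
  | 0 => fun x => Hbar x ^ 2
  | n + 1 => T (fseq n)

lemma H_eq_sigmoid : H = sigmoid := funext fun x => one_div _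

lemma Hbar_eq_sigmoid_neg (x : ℝ) : Hbar x = sigmoid (-x) := by
  rw [Hbar, H_eq_sigmoid, sigmoid_neg]

lemma Hbar_lt_one (x : ℝ) : Hbar x < 1 := Hbar_eq_sigmoid_neg x ▸ sigmoid_lt_one _

lemma image_sigmoid_Ioi (a : ℝ) : sigmoid '' Ioi a = Ioo (sigmoid a) 1 := by
  refine subset_antisymm ?_ fun y hy => ?_
  · rintro - ⟨s, hs, rfl⟩
    exact ⟨sigmoid_lt hs, sigmoid_lt_one s⟩
  · obtain ⟨s, rfl⟩ : y ∈ range sigmoid :=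
      range_sigmoid ▸ ⟨(sigmoid_pos a).trans hy.1, hy.2⟩
    exact ⟨s, sigmoid_lt_iff.1 hy.1, rfl⟩

lemma setIntegral_Ioi_sigmoid_deriv_mul_comp (a : ℝ) (g : ℝ → ℝ) :
    ∫ s in Ioi a, sigmoid s * (1 - sigmoid s) * g (sigmoid s) =
      ∫ w in Ioo (sigmoid a) 1, g w := by
  rw [← image_sigmoid_Ioi, integral_image_eq_integral_abs_deriv_smul measurableSet_Ioi
    (fun s _ => (hasDerivAt_sigmoid s).hasDerivWithinAt) sigmoid_injective.injOn]
  refine setIntegral_congr_fun measurableSet_Ioi fun s _ => ?_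
  rw [abs_of_pos (mul_pos (sigmoid_pos s) (sub_pos.2 (sigmoid_lt_one s))), smul_eq_mul]

lemma setIntegral_Ioi_Hbar_mul_comp (φ : ℝ → ℝ) (x : ℝ) :
    ∫ s in Ioi (-x), Hbar s * φ (Hbar s) = ∫ w in Ioo (Hbar x) 1, φ (1 - w) / w := by
  rw [Hbar_eq_sigmoid_neg, ← setIntegral_Ioi_sigmoid_deriv_mul_comp]
  refine setIntegral_congr_fun measurableSet_Ioi fun s _ => ?_
  have := (sigmoid_pos s).ne'
  simp only [Hbar, H_eq_sigmoid]
  field_simp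

lemma T_Hbar_mul_comp (φ : ℝ → ℝ) (x : ℝ)
    (hφ : IntegrableOn (fun w => 1 / w * (1 - φ (1 - w))) (Ioc (Hbar x) 1)) :
    T (fun s => Hbar s * φ (Hbar s)) x =
      Hbar x * exp (-∫ w in Ioc (Hbar x) 1, 1 / w * (1 - φ (1 - w))) := by
  have hpos := Hbar_pos x
  have hle := (Hbar_lt_one x).le
  have hinv : IntegrableOn (fun w : ℝ => 1 / w) (Ioc (Hbar x) 1) :=
    (intervalIntegral.intervalIntegrable_one_div
      (fun w hw => (hpos.trans_le (uIcc_of_le hle ▸ hw).1).ne') continuousOn_id).1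
  have hlog : ∫ w in Ioc (Hbar x) 1, 1 / w = -log (Hbar x) := by
    rw [← intervalIntegral.integral_of_le hle, integral_one_div_of_pos hpos one_pos, one_div,
      log_inv]
  have hint : ∫ s in Ioi (-x), Hbar s * φ (Hbar s) =
      -log (Hbar x) - ∫ w in Ioc (Hbar x) 1, 1 / w * (1 - φ (1 - w)) := by
    rw [setIntegral_Ioi_Hbar_mul_comp, ← integral_Ioc_eq_integral_Ioo, ← hlog,
      ← integral_sub hinv hφ]
    refine setIntegral_congr_fun measurableSet_Ioc fun w _ => ?_
    ring
  rw [T, hint, sub_eq_add_neg, exp_add, exp_neg, exp_log hpos]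
  field_simp

-- At `w = 0` the bound holds because `1 / 0 = 0`.
lemma one_div_mul_one_sub_exp_neg_mem_Icc {w b : ℝ} (hb : 0 ≤ b) (hbw : b ≤ w) :
    1 / w * (1 - exp (-b)) ∈ Icc (0 : ℝ) 1 := by
  have h₀ : 0 ≤ 1 - exp (-b) := sub_nonneg.2 (exp_le_one_iff.2 (neg_nonpos.2 hb))
  have h₁ : 1 - exp (-b) ≤ b := by linarith [add_one_le_exp (-b)]
  rcases (hb.trans hbw).eq_or_lt with rfl | hw
  · simp
  · refine ⟨by positivity, ?_⟩
    rw [one_div_mul_eq_div, div_le_one hw]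
    exact h₁.trans hbw

noncomputable def betaIntegrand (n : ℕ) (w : ℝ) : ℝ := 1 / w * (1 - exp (-beta n (1 - w)))

section Invariant

variable {n : ℕ} (hc : ContinuousOn (beta n) (Icc 0 1))
  (hb : ∀ s ∈ Icc (0 : ℝ) 1, beta n s ∈ Icc 0 (1 - s))
include hb

lemma betaIntegrand_mem_Icc {w : ℝ} (hw : w ∈ Icc (0 : ℝ) 1) :
    betaIntegrand n w ∈ Icc (0 : ℝ) 1 :=
  have h := hb (1 - w) ⟨sub_nonneg.2 hw.2, sub_le_self 1 hw.1⟩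
  one_div_mul_one_sub_exp_neg_mem_Icc h.1 (by linarith [h.2])

include hc

lemma integrableOn_betaIntegrand : IntegrableOn (betaIntegrand n) (Icc 0 1) := by
  rw [integrableOn_Icc_iff_integrableOn_Ioc]
  have hcont : ContinuousOn (betaIntegrand n) (Ioc 0 1) :=
    (continuousOn_const.div continuousOn_id fun w hw => hw.1.ne').mul <|
      continuousOn_const.sub <| (hc.comp (continuousOn_const.sub continuousOn_id)
        fun w hw => ⟨sub_nonneg.2 hw.2, sub_le_self 1 hw.1.le⟩).neg.rexp
  refine .of_bound measure_Ioc_lt_top (hcont.aestronglyMeasurable measurableSet_Ioc) 1 ?_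
  filter_upwards [ae_restrict_mem measurableSet_Ioc] with w hw
  have h := betaIntegrand_mem_Icc hb (Ioc_subset_Icc_self hw)
  rw [Real.norm_of_nonneg h.1]
  exact h.2

lemma continuousOn_beta_succ : ContinuousOn (beta (n + 1)) (Icc 0 1) := by
  have h := intervalIntegral.continuousOn_primitive_interval_left
    (uIcc_of_le (zero_le_one' ℝ) ▸ integrableOn_betaIntegrand hc hb)
  rw [uIcc_of_le (zero_le_one' ℝ)] at h
  exact h.congr fun s hs => (intervalIntegral.integral_of_le hs.2).symm

lemma beta_succ_mem_Icc {s : ℝ} (hs : s ∈ Icc (0 : ℝ) 1) :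
    beta (n + 1) s ∈ Icc 0 (1 - s) := by
  have hsub : Ioc s 1 ⊆ Icc 0 1 := Ioc_subset_Icc_self.trans (Icc_subset_Icc_left hs.1)
  refine ⟨setIntegral_nonneg measurableSet_Ioc fun w hw =>
    (betaIntegrand_mem_Icc hb (hsub hw)).1, ?_⟩
  calc beta (n + 1) s ≤ ∫ _ in Ioc s 1, (1 : ℝ) :=
        setIntegral_mono_on ((integrableOn_betaIntegrand hc hb).mono_set hsub)
          (integrableOn_const measure_Ioc_lt_top.ne) measurableSet_Ioc
          fun w hw => (betaIntegrand_mem_Icc hb (hsub hw)).2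
    _ = 1 - s := by rw [setIntegral_const, volume_real_Ioc_of_le hs.2, smul_eq_mul, mul_one]

end Invariant

lemma beta_continuousOn_and_mem_Icc (n : ℕ) : ContinuousOn (beta n) (Icc 0 1) ∧
    ∀ s ∈ Icc (0 : ℝ) 1, beta n s ∈ Icc 0 (1 - s) := by
  induction n with
  | zero =>
    exact ⟨continuousOn_const.sub continuousOn_id, fun s hs => ⟨sub_nonneg.2 hs.2, le_rfl⟩⟩
  | succ n ih => exact ⟨continuousOn_beta_succ ih.1 ih.2, fun s => beta_succ_mem_Icc ih.1 ih.2⟩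

lemma fseq_succ (m : ℕ) : fseq (m + 1) = fun x => Hbar x * exp (-beta m (Hbar x)) := by
  induction m with
  | zero =>
    funext x
    have hone : EqOn (fun w => 1 / w * (1 - id (1 - w))) (fun _ => 1) (Ioc (Hbar x) 1) :=
      fun w hw => by simp [((Hbar_pos x).trans hw.1).ne']
    have h := T_Hbar_mul_comp id x ((integrableOn_const measure_Ioc_lt_top.ne).congr_fun
      hone.symm measurableSet_Ioc)
    rw [setIntegral_congr_fun measurableSet_Ioc hone, setIntegral_const,
      volume_real_Ioc_of_le (Hbar_lt_one x).le, smul_eq_mul, mul_one] at h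
    simpa only [fseq, id, ← sq, beta] using h
  | succ m ih =>
    funext x
    obtain ⟨hc, hb⟩ := beta_continuousOn_and_mem_Icc m
    rw [fseq, ih]
    exact T_Hbar_mul_comp (fun t => exp (-beta m t)) x
      ((integrableOn_betaIntegrand hc hb).mono_set (Ioc_subset_Icc_self.trans
        (Icc_subset_Icc_left (Hbar_pos x).le)))

/-- For every `n ≥ 1` and every `x ∈ ℝ`,
`f_n(x) = H̄(x) · exp(−β_{n−1}(H̄(x)))`. -/
theorem stmt5 (n : ℕ) (hn : 1 ≤ n) (x : ℝ) :
    fseq n x = Hbar x * Real.exp (-(beta (n - 1) (Hbar x))) := by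
  obtain ⟨m, rfl⟩ := Nat.exists_eq_add_of_le' hn
  rw [fseq_succ, Nat.add_sub_cancel]
end

section
/- Let L : [0,1] → [0,1] satisfy L(s) = ∫_s^1 (1/w)(1 − e^{−L(1−w)}) dw for all s ∈ [0,1) with L(1) = 0, and define η(w) := (1−w)·e^{L(1−w)} + w·e^{−L(w)} − 1 for w ∈ [0,1]. Then η(0) = η(1) = 0, η is differentiable on (0,1) with η′(w) = e^{−L(w)}·[2 − (e^{L(1−w)} + e^{−L(1−w)})] ≤ 0 for all w ∈ (0,1), and consequently η ≡ 0 on [0,1]. -/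
open MeasureTheory Real Set Filter

/-- The function `η(w) := (1−w)·e^{L(1−w)} + w·e^{−L(w)} − 1`. -/
noncomputable def eta (L : ℝ → ℝ) (w : ℝ) : ℝ :=
  (1 - w) * Real.exp (L (1 - w)) + w * Real.exp (-(L w)) - 1

/-!
Nothing is assumed about the measurability of `L`, so the first task is to show that the
integrand `f(w) = (1 - e^{-L(1-w)}) / w` is integrable on `(0, 1]`. If `σ > 0` were the least
`t` with `f` integrable on `(t, 1]`, then `L` would vanish on `[0, σ)` (a non-integrable set
integral is `0`), hence on `[1 - σ, 1]`, hence `f` would vanish on `(0, σ]`, contradicting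
minimality; integrability at the infimum itself comes from `∫_t^1 |f| = L t ≤ 1`.
Then `L(s) = ∫_s^1 f` is continuous on `[0, 1]` and differentiable on `(0, 1)` with `L' = -f`,
and differentiating `η` gives the stated derivative, which is `≤ 0` because
`e^a + e^{-a} = 2 cosh a ≥ 2`. So `η` is antitone on `[0, 1]` and vanishes at both endpoints.
-/

open Topology

lemma integrableOn_Ioc_of_forall_lt_of_integral_norm_le {f : ℝ → ℝ} {a b I : ℝ}
    (hfi : ∀ t, a < t → IntegrableOn f (Ioc t b))
    (hI : ∀ t, a < t → ∫ x in Ioc t b, ‖f x‖ ≤ I) : IntegrableOn f (Ioc a b) := by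
  have hlt (n : ℕ) : a < a + 1 / (n + 1) := lt_add_of_pos_right a Nat.one_div_pos_of_nat
  have hlim : Tendsto (fun n : ℕ => a + 1 / (n + 1)) atTop (𝓝 a) := by
    simpa using tendsto_one_div_add_atTop_nhds_zero_nat.const_add a
  exact integrableOn_Ioc_of_intervalIntegral_norm_bounded (fun n => hfi _ (hlt n)) hlim
    tendsto_const_nhds (Eventually.of_forall fun n => hI _ (hlt n))

lemma eqOn_zero_of_hasDerivAt_nonpos {g g' : ℝ → ℝ} {a b : ℝ} (hg : ContinuousOn g (Icc a b))
    (hg' : ∀ x ∈ Ioo a b, HasDerivAt g (g' x) x ∧ g' x ≤ 0) (ha : g a = 0) (hb : g b = 0) :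
    ∀ x ∈ Icc a b, g x = 0 := by
  have hanti : AntitoneOn g (Icc a b) := by
    refine antitoneOn_of_hasDerivWithinAt_nonpos (f' := g') (convex_Icc a b) hg
      (fun x hx => ?_) fun x hx => ?_
    all_goals rw [interior_Icc] at hx
    exacts [(hg' x hx).1.hasDerivWithinAt, (hg' x hx).2]
  intro x hx
  have hab : a ≤ b := hx.1.trans hx.2
  apply le_antisymm
  · simpa [ha] using hanti (left_mem_Icc.2 hab) hx hx.1
  · simpa [hb] using hanti hx (right_mem_Icc.2 hab) hx.2

lemma two_sub_exp_add_exp_neg_nonpos (a : ℝ) : 2 - (exp a + exp (-a)) ≤ 0 := by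
  linarith [one_le_cosh a, cosh_eq a]

noncomputable def integrand (L : ℝ → ℝ) (w : ℝ) : ℝ := (1 / w) * (1 - exp (-(L (1 - w))))

def SolvesIntegralEquation (L : ℝ → ℝ) : Prop :=
  ∀ s ∈ Ico (0 : ℝ) 1, L s = ∫ w in Ioc s 1, integrand L w

section

variable {L : ℝ → ℝ}

lemma integrand_nonneg (hmap : MapsTo L (Icc 0 1) (Icc 0 1)) {w : ℝ} (hw : w ∈ Ioc 0 1) :
    0 ≤ integrand L w := by
  have hL : 0 ≤ L (1 - w) := (hmap (Icc.mem_iff_one_sub_mem.1 (Ioc_subset_Icc_self hw))).1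
  have : exp (-(L (1 - w))) ≤ 1 := exp_le_one_iff.mpr (by linarith)
  exact mul_nonneg (one_div_nonneg.mpr hw.1.le) (by linarith)

lemma integrand_eq_zero {w : ℝ} (h : L (1 - w) = 0) : integrand L w = 0 := by
  simp [integrand, h]

end

namespace SolvesIntegralEquation

variable {L : ℝ → ℝ}

lemma integral_norm_integrand_le_one (h : SolvesIntegralEquation L)
    (hmap : MapsTo L (Icc 0 1) (Icc 0 1)) {t : ℝ} (ht : 0 ≤ t) :
    ∫ x in Ioc t 1, ‖integrand L x‖ ≤ 1 := by
  rcases lt_or_ge t 1 with ht1 | ht1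
  · calc ∫ x in Ioc t 1, ‖integrand L x‖ = ∫ x in Ioc t 1, integrand L x :=
          setIntegral_congr_fun measurableSet_Ioc fun x hx =>
            norm_of_nonneg (integrand_nonneg hmap ⟨ht.trans_lt hx.1, hx.2⟩)
      _ = L t := (h t ⟨ht, ht1⟩).symm
      _ ≤ 1 := (hmap ⟨ht, ht1.le⟩).2
  · simp [Ioc_eq_empty (not_lt.2 ht1)]

lemma integrableOn_integrand (h : SolvesIntegralEquation L)
    (hmap : MapsTo L (Icc 0 1) (Icc 0 1)) : IntegrableOn (integrand L) (Ioc 0 1) := by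
  set A := {t : ℝ | 0 ≤ t ∧ IntegrableOn (integrand L) (Ioc t 1)}
  have h1A : (1 : ℝ) ∈ A := ⟨zero_le_one, by simp⟩
  have hbdd : BddBelow A := ⟨0, fun t ht => ht.1⟩
  set σ := sInf A
  have hσ0 : 0 ≤ σ := le_csInf ⟨1, h1A⟩ fun t ht => ht.1
  have hσ1 : σ ≤ 1 := csInf_le hbdd h1A
  have hσA : σ ∈ A := by
    refine ⟨hσ0, integrableOn_Ioc_of_forall_lt_of_integral_norm_le (I := 1) (fun t ht => ?_)
      fun t ht => h.integral_norm_integrand_le_one hmap (hσ0.trans ht.le)⟩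
    obtain ⟨a, ha, hat⟩ := exists_lt_of_csInf_lt ⟨1, h1A⟩ ht
    exact ha.2.mono_set (Ioc_subset_Ioc_left hat.le)
  suffices hσ : σ = 0 from hσ ▸ hσA.2
  by_contra hσ
  have hσpos : 0 < σ := lt_of_le_of_ne hσ0 (Ne.symm hσ)
  have below : ∀ t ∈ Ico 0 σ, L t = 0 := fun t ht => by
    rw [h t ⟨ht.1, ht.2.trans_le hσ1⟩]
    exact integral_undef fun hint => ht.2.not_ge (csInf_le hbdd ⟨ht.1, hint⟩)
  have near_one : ∀ u ∈ Ico (1 - σ) 1, L u = 0 := fun u hu => by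
    rw [h u ⟨by linarith [hu.1], hu.2⟩]
    exact setIntegral_eq_zero_of_forall_eq_zero fun w hw =>
      integrand_eq_zero (below _ ⟨by linarith [hw.2], by linarith [hw.1, hu.1]⟩)
  have vanish : EqOn (integrand L) 0 (Ioc 0 σ) := fun w hw =>
    integrand_eq_zero (near_one _ ⟨by linarith [hw.2], by linarith [hw.1]⟩)
  have hhalf : σ / 2 ∈ A := by
    refine ⟨by positivity, ?_⟩
    rw [← Ioc_union_Ioc_eq_Ioc (by linarith) hσ1]
    refine IntegrableOn.union ?_ hσA.2
    exact (integrableOn_zero.congr_fun vanish.symm measurableSet_Ioc).mono_set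
      (Ioc_subset_Ioc_left (by linarith))
  linarith [csInf_le hbdd hhalf]

lemma eqOn_intervalIntegral (h : SolvesIntegralEquation L) (hL1 : L 1 = 0) :
    EqOn L (fun s => ∫ t in s..1, integrand L t) (Icc 0 1) := by
  intro s hs
  rcases hs.2.lt_or_eq with hs1 | rfl
  · exact (h s ⟨hs.1, hs1⟩).trans (intervalIntegral.integral_of_le hs.2).symm
  · simp [hL1]

lemma continuousOn (h : SolvesIntegralEquation L) (hmap : MapsTo L (Icc 0 1) (Icc 0 1))
    (hL1 : L 1 = 0) : ContinuousOn L (Icc 0 1) := by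
  have hint : IntegrableOn (integrand L) (uIcc 0 1) := by
    rw [uIcc_of_le zero_le_one, integrableOn_Icc_iff_integrableOn_Ioc]
    exact h.integrableOn_integrand hmap
  have hprim := intervalIntegral.continuousOn_primitive_interval_left hint
  rw [uIcc_of_le zero_le_one] at hprim
  exact hprim.congr (h.eqOn_intervalIntegral hL1)

lemma continuousOn_integrand (h : SolvesIntegralEquation L)
    (hmap : MapsTo L (Icc 0 1) (Icc 0 1)) (hL1 : L 1 = 0) :
    ContinuousOn (integrand L) (Ioc 0 1) := by
  have hL : ContinuousOn (fun w => L (1 - w)) (Ioc 0 1) :=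
    (h.continuousOn hmap hL1).comp (continuousOn_const.sub continuousOn_id)
      fun w hw => Icc.mem_iff_one_sub_mem.1 (Ioc_subset_Icc_self hw)
  exact (continuousOn_const.div continuousOn_id fun w hw => hw.1.ne').mul
    (continuousOn_const.sub hL.neg.rexp)

lemma hasDerivAt (h : SolvesIntegralEquation L) (hmap : MapsTo L (Icc 0 1) (Icc 0 1))
    (hL1 : L 1 = 0) {s : ℝ} (hs : s ∈ Ioo 0 1) :
    HasDerivAt L (-integrand L s) s := by
  have hcont : ContinuousOn (integrand L) (Ioo 0 1) :=
    (h.continuousOn_integrand hmap hL1).mono Ioo_subset_Ioc_self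
  have hint : IntervalIntegrable (integrand L) volume s 1 :=
    (intervalIntegrable_iff_integrableOn_Ioc_of_le hs.2.le).2
      ((h.integrableOn_integrand hmap).mono_set (Ioc_subset_Ioc_left hs.1.le))
  refine (intervalIntegral.integral_hasDerivAt_left hint
    (hcont.stronglyMeasurableAtFilter isOpen_Ioo s hs)
    (hcont.continuousAt (Ioo_mem_nhds hs.1 hs.2))).congr_of_eventuallyEq ?_
  filter_upwards [Icc_mem_nhds hs.1 hs.2] with x hx using h.eqOn_intervalIntegral hL1 hx

lemma continuousOn_eta (h : SolvesIntegralEquation L) (hmap : MapsTo L (Icc 0 1) (Icc 0 1))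
    (hL1 : L 1 = 0) : ContinuousOn (eta L) (Icc 0 1) := by
  have hL := h.continuousOn hmap hL1
  have hL' : ContinuousOn (fun w => L (1 - w)) (Icc 0 1) :=
    hL.comp (continuousOn_const.sub continuousOn_id) fun w hw => Icc.mem_iff_one_sub_mem.1 hw
  exact (((continuousOn_const.sub continuousOn_id).mul hL'.rexp).add
    (continuousOn_id.mul hL.neg.rexp)).sub continuousOn_const

lemma hasDerivAt_eta (h : SolvesIntegralEquation L) (hmap : MapsTo L (Icc 0 1) (Icc 0 1))
    (hL1 : L 1 = 0) {w : ℝ} (hw : w ∈ Ioo 0 1) :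
    HasDerivAt (eta L) (exp (-(L w)) * (2 - (exp (L (1 - w)) + exp (-(L (1 - w)))))) w := by
  have h1w : 1 - w ∈ Ioo 0 1 := Ioo.mem_iff_one_sub_mem.1 hw
  have hlin : HasDerivAt (fun x : ℝ => 1 - x) (-1) w := by
    simpa using (hasDerivAt_id w).const_sub 1
  have hA : HasDerivAt (fun x => L (1 - x)) (integrand L (1 - w)) w := by
    simpa using (h.hasDerivAt hmap hL1 h1w).comp_const_sub 1 w
  have hB := h.hasDerivAt hmap hL1 hw
  refine ((hlin.mul hA.exp).add ((hasDerivAt_id w).mul hB.neg.exp) |>.sub_const 1).congr_deriv ?_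
  have : w ≠ 0 := hw.1.ne'
  have : 1 - w ≠ 0 := h1w.1.ne'
  simp only [integrand, sub_sub_cancel, id, Pi.neg_apply]
  field_simp
  ring

end SolvesIntegralEquation

/-- If `L : [0,1] → [0,1]` satisfies the integral equation with
`L(1) = 0`, then `η(0) = η(1) = 0`, `η` is differentiable on `(0,1)` with
`η′(w) = e^{−L(w)}·[2 − (e^{L(1−w)} + e^{−L(1−w)})] ≤ 0`, and `η ≡ 0` on `[0,1]`. -/
theorem stmt11 (L : ℝ → ℝ) (hmap : ∀ s ∈ Set.Icc (0:ℝ) 1, L s ∈ Set.Icc (0:ℝ) 1)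
    (hL : ∀ s ∈ Set.Ico (0:ℝ) 1,
      L s = ∫ w in Set.Ioc s 1, (1 / w) * (1 - Real.exp (-(L (1 - w)))))
    (hL1 : L 1 = 0) :
    eta L 0 = 0 ∧ eta L 1 = 0 ∧
      (∀ w ∈ Set.Ioo (0:ℝ) 1,
        HasDerivAt (eta L)
          (Real.exp (-(L w)) *
            (2 - (Real.exp (L (1 - w)) + Real.exp (-(L (1 - w)))))) w ∧
        Real.exp (-(L w)) *
          (2 - (Real.exp (L (1 - w)) + Real.exp (-(L (1 - w))))) ≤ 0) ∧
      (∀ w ∈ Set.Icc (0:ℝ) 1, eta L w = 0) := by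
  have h : SolvesIntegralEquation L := hL
  have hmap' : MapsTo L (Icc 0 1) (Icc 0 1) := fun s hs => hmap s hs
  have h0 : eta L 0 = 0 := by simp [eta, hL1]
  have h1 : eta L 1 = 0 := by simp [eta, hL1]
  have hderiv : ∀ w ∈ Ioo (0 : ℝ) 1, HasDerivAt (eta L)
      (exp (-(L w)) * (2 - (exp (L (1 - w)) + exp (-(L (1 - w)))))) w ∧
      exp (-(L w)) * (2 - (exp (L (1 - w)) + exp (-(L (1 - w))))) ≤ 0 := fun w hw =>
    ⟨h.hasDerivAt_eta hmap' hL1 hw,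
      mul_nonpos_of_nonneg_of_nonpos (exp_pos _).le (two_sub_exp_add_exp_neg_nonpos _)⟩
  exact ⟨h0, h1, hderiv, eqOn_zero_of_hasDerivAt_nonpos (h.continuousOn_eta hmap' hL1) hderiv h0 h1⟩
end

section
/- If L : [0,1] → [0,1] satisfies the non-linear integral equation L(s) = ∫_s^1 (1/w)(1 − e^{−L(1−w)}) dw for all s ∈ [0,1), and L(1) = 0, then L is identically zero on [0,1]. -/
open MeasureTheory Real Set Filter

/-!
Write `M t = L (1 - t)` and let `A` be the least constant with `M t ≤ A * t` on `(0, 1]`; a crude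
estimate of the integral shows `A ≤ 2`. In the equation for `M t` the factor `1 / w` cancels the
`w` of the bound `M w ≤ A * w`: by monotonicity of `1 - e^{-x}` and `1 - e^{-x} ≤ x - x² / 4`, the
integrand at `w` is at most `A - A² w / 4`. Integrating over `(1 - t, 1]`, whose points average at
least `1 / 2`, gives `M t ≤ (A - A² / 8) t`, so minimality of `A` forces `A = 0`.
-/

lemma one_sub_exp_neg_le (x : ℝ) (hx : x ≤ 2) : 1 - exp (-x) ≤ x - x ^ 2 / 4 := by
  have h : 1 - x / 2 ≤ exp (-(x / 2)) := by linarith [add_one_le_exp (-(x / 2))]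
  have hsq : exp (-(x / 2)) ^ 2 = exp (-x) := by rw [← exp_nat_mul]; ring_nf
  nlinarith [pow_le_pow_left₀ (by linarith) h 2]

lemma one_div_mul_one_sub_exp_neg_nonneg {w x : ℝ} (hw : 0 ≤ w) (hx : 0 ≤ x) :
    0 ≤ 1 / w * (1 - exp (-x)) :=
  mul_nonneg (one_div_nonneg.2 hw) (sub_nonneg.2 (exp_le_one_iff.2 (neg_nonpos.2 hx)))

lemma setIntegral_Ioc_le_of_le_affine {f : ℝ → ℝ} {a b s : ℝ} (hs0 : 0 ≤ s) (hs1 : s ≤ 1)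
    (hb : 0 ≤ b) (hf0 : ∀ w ∈ Ioc s 1, 0 ≤ f w) (hf : ∀ w ∈ Ioc s 1, f w ≤ a - b * w) :
    ∫ w in Ioc s 1, f w ≤ (a - b / 2) * (1 - s) := by
  have hmono : ∫ w in Ioc s 1, f w ≤ ∫ w in Ioc s 1, (a - b * w) :=
    integral_mono_of_nonneg ((ae_restrict_iff' measurableSet_Ioc).2 (ae_of_all _ hf0))
      (by fun_prop : Continuous fun w : ℝ => a - b * w).integrableOn_Ioc
      ((ae_restrict_iff' measurableSet_Ioc).2 (ae_of_all _ hf))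
  have haffine : ∫ w in Ioc s 1, (a - b * w) = a * (1 - s) - b * (1 - s ^ 2) / 2 := by
    rw [← intervalIntegral.integral_of_le hs1, intervalIntegral.integral_sub
      intervalIntegrable_const (intervalIntegral.intervalIntegrable_id.const_mul b),
      intervalIntegral.integral_const_mul, integral_id, intervalIntegral.integral_const,
      smul_eq_mul]
    ring
  nlinarith [mul_nonneg (mul_nonneg hb hs0) (sub_nonneg.2 hs1)]

theorem eq_zero_of_ratio_bound_improves {S : Set ℝ} {g : ℝ → ℝ} {C : ℝ}
    (hpos : ∀ t ∈ S, 0 < t) (hg0 : ∀ t ∈ S, 0 ≤ g t) (hC : ∀ t ∈ S, g t ≤ C * t)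
    (himp : ∀ A, 0 ≤ A → A ≤ C → (∀ t ∈ S, g t ≤ A * t) →
      ∀ t ∈ S, g t ≤ (A - A ^ 2 / 8) * t) :
    ∀ t ∈ S, g t = 0 := by
  intro t ht
  set R := (fun t => g t / t) '' S
  have hR : R.Nonempty := ⟨_, mem_image_of_mem _ ht⟩
  have hbound : ∀ B, (∀ t ∈ S, g t ≤ B * t) → ∀ r ∈ R, r ≤ B := by
    rintro B hB _ ⟨u, hu, rfl⟩
    exact (div_le_iff₀ (hpos u hu)).2 (hB u hu)
  have hRbdd : BddAbove R := ⟨C, hbound C hC⟩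
  set A := sSup R
  have hA : ∀ u ∈ S, g u ≤ A * u := fun u hu =>
    (div_le_iff₀ (hpos u hu)).1 (le_csSup hRbdd (mem_image_of_mem _ hu))
  have hA0 : 0 ≤ A :=
    (div_nonneg (hg0 t ht) (hpos t ht).le).trans (le_csSup hRbdd (mem_image_of_mem _ ht))
  have hAC : A ≤ C := csSup_le hR (hbound C hC)
  have hAA : A ≤ A - A ^ 2 / 8 := csSup_le hR (hbound _ (himp A hA0 hAC hA))
  have hA_eq : A = 0 := by nlinarith
  have hgt := hA t ht
  rw [hA_eq, zero_mul] at hgt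
  exact le_antisymm hgt (hg0 t ht)

section IntegralEquation

variable {L : ℝ → ℝ}

lemma le_two_mul_of_integral_eq (hmap : ∀ s ∈ Icc (0:ℝ) 1, L s ∈ Icc (0:ℝ) 1)
    (hL : ∀ s ∈ Ico (0:ℝ) 1, L s = ∫ w in Ioc s 1, (1 / w) * (1 - exp (-(L (1 - w)))))
    {t : ℝ} (ht : t ∈ Ioc (0:ℝ) 1) : L (1 - t) ≤ 2 * t := by
  rcases le_or_gt t (1 / 2) with hsmall | hlarge
  · rw [hL (1 - t) ⟨by linarith [ht.2], by linarith [ht.1]⟩]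
    have hint := setIntegral_Ioc_le_of_le_affine (f := fun w => (1 / w) * (1 - exp (-(L (1 - w)))))
      (s := 1 - t) (a := 2) (b := 0) (by linarith)
      (by linarith [ht.1]) le_rfl
      (fun w hw => one_div_mul_one_sub_exp_neg_nonneg (by linarith [hw.1])
        (hmap (1 - w) ⟨by linarith [hw.2], by linarith [hw.1]⟩).1)
      fun w hw => by
        have hw2 : 1 / 2 ≤ w := by linarith [hw.1]
        calc (1 / w) * (1 - exp (-(L (1 - w)))) ≤ 1 / w :=
              mul_le_of_le_one_right (by positivity) (by linarith [exp_pos (-(L (1 - w)))])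
          _ ≤ 2 - 0 * w := by rw [div_le_iff₀ (by linarith)]; linarith
    linarith
  · linarith [(hmap (1 - t) ⟨by linarith [ht.2], by linarith [ht.1]⟩).2]

lemma le_sub_sq_mul_of_integral_eq (hmap : ∀ s ∈ Icc (0:ℝ) 1, L s ∈ Icc (0:ℝ) 1)
    (hL : ∀ s ∈ Ico (0:ℝ) 1, L s = ∫ w in Ioc s 1, (1 / w) * (1 - exp (-(L (1 - w)))))
    {A : ℝ} (hA0 : 0 ≤ A) (hA2 : A ≤ 2) (hA : ∀ t ∈ Ioc (0:ℝ) 1, L (1 - t) ≤ A * t)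
    {t : ℝ} (ht : t ∈ Ioc (0:ℝ) 1) : L (1 - t) ≤ (A - A ^ 2 / 8) * t := by
  rw [hL (1 - t) ⟨by linarith [ht.2], by linarith [ht.1]⟩]
  have hint := setIntegral_Ioc_le_of_le_affine (f := fun w => (1 / w) * (1 - exp (-(L (1 - w)))))
    (s := 1 - t) (a := A) (b := A ^ 2 / 4)
    (by linarith [ht.2]) (by linarith [ht.1]) (by positivity)
    (fun w hw => one_div_mul_one_sub_exp_neg_nonneg (by linarith [hw.1, ht.2])
      (hmap (1 - w) ⟨by linarith [hw.2], by linarith [hw.1, ht.2]⟩).1)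
    fun w hw => by
      have hw0 : 0 < w := by linarith [hw.1, ht.2]
      have hLw := hA w ⟨hw0, hw.2⟩
      calc (1 / w) * (1 - exp (-(L (1 - w)))) ≤ (1 / w) * (1 - exp (-(A * w))) := by gcongr
        _ ≤ (1 / w) * (A * w - (A * w) ^ 2 / 4) :=
            mul_le_mul_of_nonneg_left (one_sub_exp_neg_le _ (by nlinarith [hw.2])) (by positivity)
        _ = A - A ^ 2 / 4 * w := by field_simp
  convert hint using 2 <;> ring

end IntegralEquation

/-- If `L : [0,1] → [0,1]` satisfies
`L(s) = ∫_s^1 (1/w)(1 − e^{−L(1−w)}) dw` for all `s ∈ [0,1)` and `L(1) = 0`,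
then `L` is identically zero on `[0,1]`. -/
theorem stmt12 (L : ℝ → ℝ) (hmap : ∀ s ∈ Set.Icc (0:ℝ) 1, L s ∈ Set.Icc (0:ℝ) 1)
    (hL : ∀ s ∈ Set.Ico (0:ℝ) 1,
      L s = ∫ w in Set.Ioc s 1, (1 / w) * (1 - Real.exp (-(L (1 - w)))))
    (hL1 : L 1 = 0) :
    ∀ s ∈ Set.Icc (0:ℝ) 1, L s = 0 := by
  have hzero : ∀ t ∈ Ioc (0:ℝ) 1, L (1 - t) = 0 :=
    eq_zero_of_ratio_bound_improves (fun t ht => ht.1)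
      (fun t ht => (hmap (1 - t) ⟨by linarith [ht.2], by linarith [ht.1]⟩).1)
      (fun _ => le_two_mul_of_integral_eq hmap hL)
      fun _ hA0 hA2 hA _ => le_sub_sq_mul_of_integral_eq hmap hL hA0 hA2 hA
  intro s hs
  rcases hs.2.eq_or_lt with rfl | hs1
  · exact hL1
  · simpa using hzero (1 - s) ⟨by linarith, by linarith [hs.1]⟩
end

section
/- Let (X_n, Y_n), n ≥ 1, and (X, Y) be pairs of real-valued random variables such that each of X_n, Y_n, X, Y has the Logistic distribution, and suppose (X_n, Y_n) converges in distribution to (X, Y) on ℝ². Then for every x, y ∈ ℝ, H̄(x)·H̄(y)·exp(−E[(X_n + x)⁺ ∧ (Y_n + y)⁺]) converges to H̄(x)·H̄(y)·exp(−E[(X + x)⁺ ∧ (Y + y)⁺]) as n → ∞. -/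
/-! Truncating `g = (· + x)⁺ ∧ (· + y)⁺` at level `M` gives a bounded continuous function, so
`E[g(Xₙ, Yₙ) ∧ M] → E[g(X, Y) ∧ M]` for each `M`. Since `g(Xₙ, Yₙ) ≤ (Xₙ + x)⁺` and the Logistic
tail satisfies `H̄(c) ≤ e^{-c}`, the layer-cake formula bounds the truncation error by `e^{x - M}`
uniformly in `n`, so the two limits can be interchanged. -/

open MeasureTheory Real Set Filter

open Topology

section ExponentialTail

variable {Ω : Type*} [MeasurableSpace Ω] {P : Measure Ω} {f : Ω → ℝ} {a : ℝ}

lemma lintegral_max_sub_le_of_tail_le (hf : AEMeasurable f P)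
    (htail : ∀ c, 0 ≤ c → P {ω | c < f ω} ≤ ENNReal.ofReal (exp (a - c)))
    {M : ℝ} (hM : 0 ≤ M) :
    ∫⁻ ω, ENNReal.ofReal (max (f ω - M) 0) ∂P ≤ ENNReal.ofReal (exp (a - M)) := by
  rw [lintegral_eq_lintegral_meas_lt (f := fun ω => max (f ω - M) 0) P
    (.of_forall fun ω => le_max_right _ _) (by fun_prop)]
  calc ∫⁻ t in Ioi 0, P {ω | t < max (f ω - M) 0}
      ≤ ∫⁻ t in Ioi 0, ENNReal.ofReal (exp (a - M)) * ENNReal.ofReal (exp (-t)) := by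
        refine setLIntegral_mono' measurableSet_Ioi fun t (ht : 0 < t) => ?_
        have hset : {ω | t < max (f ω - M) 0} = {ω | M + t < f ω} := by
          ext ω
          simp only [mem_ofPred_eq, lt_max_iff, ht.not_gt, or_false]
          constructor <;> intro h <;> linarith
        rw [hset, ← ENNReal.ofReal_mul (exp_pos _).le, ← exp_add]
        convert htail (M + t) (by positivity) using 4
        ring
    _ = ENNReal.ofReal (exp (a - M)) := by
        have hexp : IntegrableOn (fun t : ℝ => exp (-t)) (Ioi 0) := by
          simpa using exp_neg_integrableOn_Ioi 0 one_pos
        rw [lintegral_const_mul _ (by fun_prop), ← ofReal_integral_eq_lintegral_ofReal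
          hexp (.of_forall fun t => (exp_pos _).le),
          integral_exp_neg_Ioi_zero, ENNReal.ofReal_one, mul_one]

lemma integrable_of_tail_le (hf : AEMeasurable f P) (hf0 : ∀ ω, 0 ≤ f ω)
    (htail : ∀ c, 0 ≤ c → P {ω | c < f ω} ≤ ENNReal.ofReal (exp (a - c))) :
    Integrable f P := by
  refine ⟨hf.aestronglyMeasurable, (hasFiniteIntegral_iff_ofReal (.of_forall hf0)).2 ?_⟩
  have := lintegral_max_sub_le_of_tail_le hf htail le_rfl
  simp only [sub_zero, max_eq_left (hf0 _)] at this
  exact this.trans_lt ENNReal.ofReal_lt_top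

lemma dist_integral_integral_min_le (hf : AEMeasurable f P) (hf0 : ∀ ω, 0 ≤ f ω)
    (htail : ∀ c, 0 ≤ c → P {ω | c < f ω} ≤ ENNReal.ofReal (exp (a - c)))
    {M : ℝ} (hM : 0 ≤ M) :
    dist (∫ ω, f ω ∂P) (∫ ω, min (f ω) M ∂P) ≤ exp (a - M) := by
  have hfi := integrable_of_tail_le hf hf0 htail
  have hmin : Integrable (fun ω => min (f ω) M) P :=
    hfi.mono' (by fun_prop) (.of_forall fun ω => by
      rw [Real.norm_of_nonneg (le_min (hf0 ω) hM)]; exact min_le_left _ _)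
  have hsub : ∀ ω, f ω - min (f ω) M = max (f ω - M) 0 := fun ω => by
    rcases le_total (f ω) M with h | h <;> simp [h]
  rw [dist_eq_norm, ← integral_sub hfi hmin, funext hsub,
    integral_eq_lintegral_of_nonneg_ae (f := fun ω => max (f ω - M) 0)
      (.of_forall fun ω => le_max_right _ _) (by fun_prop),
    Real.norm_of_nonneg ENNReal.toReal_nonneg]
  exact ENNReal.toReal_le_of_le_ofReal (exp_pos _).le
    (lintegral_max_sub_le_of_tail_le hf htail hM)

lemma tendstoUniformly_integral_min {ι : Type*} {f : ι → Ω → ℝ}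
    (hf : ∀ i, AEMeasurable (f i) P) (hf0 : ∀ i ω, 0 ≤ f i ω)
    (htail : ∀ i c, 0 ≤ c → P {ω | c < f i ω} ≤ ENNReal.ofReal (exp (a - c))) :
    TendstoUniformly (fun M i => ∫ ω, min (f i ω) M ∂P) (fun i => ∫ ω, f i ω ∂P) atTop := by
  rw [Metric.tendstoUniformly_iff]
  intro ε hε
  have hsmall : ∀ᶠ M in atTop, exp (a - M) < ε := by
    have : Tendsto (fun M => exp (a - M)) atTop (𝓝 0) :=
      tendsto_exp_atBot.comp (tendsto_atBot_add_const_left _ a tendsto_neg_atTop_atBot)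
    exact this.eventually (gt_mem_nhds hε)
  filter_upwards [hsmall, eventually_ge_atTop 0] with M hMε hM i
  exact (dist_integral_integral_min_le (hf i) (hf0 i) (htail i) hM).trans_lt hMε

end ExponentialTail

theorem tendsto_integral_comp_of_tail_le {Ω E : Type*} [MeasurableSpace Ω] {P : Measure Ω}
    [TopologicalSpace E] [MeasurableSpace E] [OpensMeasurableSpace E]
    {Zn : ℕ → Ω → E} {Z : Ω → E} (hZn : ∀ n, Measurable (Zn n)) (hZ : Measurable Z)
    {G : E → ℝ} (hG : Continuous G) (hG0 : ∀ p, 0 ≤ G p) {a : ℝ}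
    (htailn : ∀ n c, 0 ≤ c → P {ω | c < G (Zn n ω)} ≤ ENNReal.ofReal (exp (a - c)))
    (htail : ∀ c, 0 ≤ c → P {ω | c < G (Z ω)} ≤ ENNReal.ofReal (exp (a - c)))
    (hconv : ∀ f : BoundedContinuousFunction E ℝ,
      Tendsto (fun n => ∫ ω, f (Zn n ω) ∂P) atTop (𝓝 (∫ ω, f (Z ω) ∂P))) :
    Tendsto (fun n => ∫ ω, G (Zn n ω) ∂P) atTop (𝓝 (∫ ω, G (Z ω) ∂P)) := by
  have hlim : Tendsto (fun M => ∫ ω, min (G (Z ω)) M ∂P) atTop (𝓝 (∫ ω, G (Z ω) ∂P)) :=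
    (tendstoUniformly_integral_min (ι := Unit) (fun _ => (hG.measurable.comp hZ).aemeasurable)
      (fun _ ω => hG0 _) (fun _ => htail)).tendsto_at ()
  refine (tendstoUniformly_integral_min (fun n => (hG.measurable.comp (hZn n)).aemeasurable)
    (fun n ω => hG0 _) htailn).tendsto_of_eventually_tendsto ?_ hlim
  filter_upwards [eventually_ge_atTop 0] with M hM
  exact hconv (.ofNormedAddCommGroup (fun p => min (G p) M) (hG.min continuous_const) M
    fun p => by rw [Real.norm_of_nonneg (le_min (hG0 p) hM)]; exact min_le_right _ _)

lemma Hbar_le_exp_neg (c : ℝ) : Hbar c ≤ exp (-c) := by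
  have hHbar : Hbar c = exp (-c) / (1 + exp (-c)) := by
    unfold Hbar H
    field_simp
    ring
  rw [hHbar]
  exact div_le_self (exp_pos _).le (by linarith [exp_pos (-c)])

lemma measure_lt_le_of_logistic {Ω : Type*} [MeasurableSpace Ω] {P : Measure Ω}
    [IsProbabilityMeasure P] {Z : Ω → ℝ} (hZ : Measurable Z)
    (hlog : ∀ x, (P {ω | Z ω ≤ x}).toReal = H x) (c : ℝ) :
    P {ω | c < Z ω} ≤ ENNReal.ofReal (exp (-c)) := by
  have hcompl : {ω | c < Z ω} = {ω | Z ω ≤ c}ᶜ := by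
    ext ω
    simp
  rw [hcompl, prob_compl_eq_one_sub (measurableSet_le hZ measurable_const),
    ← ENNReal.ofReal_toReal (measure_ne_top P _), hlog, ← ENNReal.ofReal_one,
    ← ENNReal.ofReal_sub _ (by unfold H; positivity)]
  exact ENNReal.ofReal_le_ofReal (Hbar_le_exp_neg c)

lemma measure_lt_min_le_of_logistic {Ω : Type*} [MeasurableSpace Ω] {P : Measure Ω}
    [IsProbabilityMeasure P] {Z : Ω → ℝ} (hZ : Measurable Z)
    (hlog : ∀ x, (P {ω | Z ω ≤ x}).toReal = H x) (W : Ω → ℝ) (x : ℝ) {c : ℝ} (hc : 0 ≤ c) :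
    P {ω | c < min (max (Z ω + x) 0) (W ω)} ≤ ENNReal.ofReal (exp (x - c)) := by
  calc P {ω | c < min (max (Z ω + x) 0) (W ω)}
      ≤ P {ω | c - x < Z ω} := by
        refine measure_mono fun ω (h : c < _) => ?_
        have := (lt_max_iff.1 (h.trans_le (min_le_left _ _))).resolve_right hc.not_gt
        show c - x < Z ω
        linarith
    _ ≤ ENNReal.ofReal (exp (x - c)) := by
        simpa using measure_lt_le_of_logistic hZ hlog (c - x)

theorem stmt18_general {Ω : Type*} [MeasurableSpace Ω] (P : Measure Ω)
    [IsProbabilityMeasure P]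
    (Xn Yn : ℕ → Ω → ℝ) (X Y : Ω → ℝ)
    (hXn : ∀ n, Measurable (Xn n)) (hYn : ∀ n, Measurable (Yn n))
    (hX : Measurable X) (hY : Measurable Y)
    (hXnlog : ∀ n x, (P {ω | Xn n ω ≤ x}).toReal = H x)
    (hXlog : ∀ x, (P {ω | X ω ≤ x}).toReal = H x)
    (hconv : ∀ f : BoundedContinuousFunction (ℝ × ℝ) ℝ,
      Filter.Tendsto (fun n => ∫ ω, f (Xn n ω, Yn n ω) ∂P) Filter.atTop
        (nhds (∫ ω, f (X ω, Y ω) ∂P)))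
    (x y : ℝ) :
    Filter.Tendsto
      (fun n => Hbar x * Hbar y *
        Real.exp (-∫ ω, min (max (Xn n ω + x) 0) (max (Yn n ω + y) 0) ∂P))
      Filter.atTop
      (nhds (Hbar x * Hbar y *
        Real.exp (-∫ ω, min (max (X ω + x) 0) (max (Y ω + y) 0) ∂P))) := by
  have hmean : Tendsto (fun n => ∫ ω, min (max (Xn n ω + x) 0) (max (Yn n ω + y) 0) ∂P) atTop
      (𝓝 (∫ ω, min (max (X ω + x) 0) (max (Y ω + y) 0) ∂P)) :=
    tendsto_integral_comp_of_tail_le (G := fun p => min (max (p.1 + x) 0) (max (p.2 + y) 0))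
      (fun n => (hXn n).prodMk (hYn n)) (hX.prodMk hY) (by fun_prop)
      (fun p => le_min (le_max_right _ _) (le_max_right _ _))
      (fun n _ hc => measure_lt_min_le_of_logistic (hXn n) (hXnlog n) _ x hc)
      (fun _ hc => measure_lt_min_le_of_logistic hX hXlog _ x hc) hconv
  exact ((continuous_exp.tendsto _).comp hmean.neg).const_mul _

/-- Under the same hypotheses as Statement 17, for all
`x, y ∈ ℝ`, `H̄(x)·H̄(y)·exp(−E[(X_n + x)⁺ ∧ (Y_n + y)⁺])` converges to
`H̄(x)·H̄(y)·exp(−E[(X + x)⁺ ∧ (Y + y)⁺])`. -/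
theorem stmt18 {Ω : Type*} [MeasurableSpace Ω] (P : Measure Ω)
    [IsProbabilityMeasure P]
    (Xn Yn : ℕ → Ω → ℝ) (X Y : Ω → ℝ)
    (hXn : ∀ n, Measurable (Xn n)) (hYn : ∀ n, Measurable (Yn n))
    (hX : Measurable X) (hY : Measurable Y)
    (hXnlog : ∀ n x, (P {ω | Xn n ω ≤ x}).toReal = H x)
    (hYnlog : ∀ n x, (P {ω | Yn n ω ≤ x}).toReal = H x)
    (hXlog : ∀ x, (P {ω | X ω ≤ x}).toReal = H x)
    (hYlog : ∀ x, (P {ω | Y ω ≤ x}).toReal = H x)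
    (hconv : ∀ f : BoundedContinuousFunction (ℝ × ℝ) ℝ,
      Filter.Tendsto (fun n => ∫ ω, f (Xn n ω, Yn n ω) ∂P) Filter.atTop
        (nhds (∫ ω, f (X ω, Y ω) ∂P)))
    (x y : ℝ) :
    Filter.Tendsto
      (fun n => Hbar x * Hbar y *
        Real.exp (-∫ ω, min (max (Xn n ω + x) 0) (max (Yn n ω + y) 0) ∂P))
      Filter.atTop
      (nhds (Hbar x * Hbar y *
        Real.exp (-∫ ω, min (max (X ω + x) 0) (max (Y ω + y) 0) ∂P))) :=
  stmt18_general P Xn Yn X Y hXn hYn hX hY hXnlog hXlog hconv x y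
end
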